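/- arXiv:1503.03903 — 2 statements merged into one kernel-verified Lean document; each statement's English description precedes it below -/
import Mathlib

section
/- (Sparse PCA from a Sketch.) Let A, Ã ∈ ℝ^{m×n}, let 1 ≤ k ≤ n and 1 ≤ r ≤ n. Suppose S_k ∈ S(n,k,r) satisfies trace(S_kᵀ Aᵀ A S_k) ≥ trace(Vᵀ Aᵀ A V) for all V ∈ S(n,k,r), and S̃_k ∈ S(n,k,r) satisfies trace(S̃_kᵀ Ãᵀ Ã S̃_k) ≥ trace(Vᵀ Ãᵀ Ã V) for all V ∈ S(n,k,r). Then trace(S̃_kᵀ Aᵀ A S̃_k) ≥ trace(S_kᵀ Aᵀ A S_k) − 2k · ‖Aᵀ A − Ãᵀ Ã‖₂. -/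
open Matrix

/-- The spectral norm of a real matrix: the operator norm induced by the
Euclidean vector norms (equal to the largest singular value). -/
noncomputable def specNorm {m n : ℕ} (A : Matrix (Fin m) (Fin n) ℝ) : ℝ :=
  ‖LinearMap.toContinuousLinearMap (Matrix.toEuclideanLin A)‖

/-- The Frobenius norm of a real matrix. -/
noncomputable def frobNorm {m n : ℕ} (A : Matrix (Fin m) (Fin n) ℝ) : ℝ :=
  Real.sqrt (∑ i, ∑ j, (A i j) ^ 2)

/-- The r-sparse Stiefel set: n×k real matrices V with VᵀV = I and each
column having at most r nonzero entries. -/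
def sparseStiefel (n k r : ℕ) : Set (Matrix (Fin n) (Fin k) ℝ) :=
  {V | Vᵀ * V = 1 ∧ ∀ j, (Finset.univ.filter fun i => V i j ≠ 0).card ≤ r}

/-!
For `V` with orthonormal columns, `trace (Vᵀ M V)` is the sum of the Rayleigh quotients of `M`
at the `k` columns of `V`, so `|trace (Vᵀ M V)| ≤ k ‖M‖₂`. Hence at every such `V` the
objectives `V ↦ trace (Vᵀ AᵀA V)` and `V ↦ trace (Vᵀ ÃᵀÃ V)` differ by at most `k ‖AᵀA - ÃᵀÃ‖₂`,
and comparing at `S̃ₖ` and `Sₖ` through the optimality of `S̃ₖ` for `Ã` costs this twice.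
-/

open RealInnerProductSpace in
lemma abs_dotProduct_mulVec_le_specNorm {n : ℕ} (M : Matrix (Fin n) (Fin n) ℝ)
    (v : Fin n → ℝ) : |v ⬝ᵥ M *ᵥ v| ≤ specNorm M * (v ⬝ᵥ v) := by
  set T := LinearMap.toContinuousLinearMap (Matrix.toEuclideanLin M)
  set x : EuclideanSpace ℝ (Fin n) := WithLp.toLp 2 v
  have hquad : v ⬝ᵥ M *ᵥ v = ⟪x, T x⟫ := dotProduct_comm _ _
  have hnorm : v ⬝ᵥ v = ‖x‖ * ‖x‖ := by
    rw [← real_inner_self_eq_norm_mul_norm]; rfl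
  rw [hquad, hnorm]
  calc |⟪x, T x⟫| ≤ ‖x‖ * ‖T x‖ := abs_real_inner_le_norm x (T x)
    _ ≤ ‖x‖ * (‖T‖ * ‖x‖) := by gcongr; exact T.le_opNorm x
    _ = ‖T‖ * (‖x‖ * ‖x‖) := by ring

lemma trace_transpose_mul_mul {n k : ℕ} (M : Matrix (Fin n) (Fin n) ℝ)
    (V : Matrix (Fin n) (Fin k) ℝ) :
    trace (Vᵀ * M * V) = ∑ j, Vᵀ j ⬝ᵥ M *ᵥ Vᵀ j := by
  simp only [trace, diag, Matrix.mul_assoc]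
  rfl

lemma abs_trace_transpose_mul_mul_le {n k : ℕ} (M : Matrix (Fin n) (Fin n) ℝ)
    (V : Matrix (Fin n) (Fin k) ℝ) (hV : Vᵀ * V = 1) :
    |trace (Vᵀ * M * V)| ≤ k * specNorm M := by
  have hcol : ∀ j, Vᵀ j ⬝ᵥ Vᵀ j = 1 := fun j => by
    simpa [Matrix.mul_apply, dotProduct] using congrFun (congrFun hV j) j
  rw [trace_transpose_mul_mul]
  calc |∑ j, Vᵀ j ⬝ᵥ M *ᵥ Vᵀ j| ≤ ∑ j, |Vᵀ j ⬝ᵥ M *ᵥ Vᵀ j| := Finset.abs_sum_le_sum_abs _ _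
    _ ≤ ∑ _j : Fin k, specNorm M := Finset.sum_le_sum fun j _ => by
        simpa [hcol j] using abs_dotProduct_mulVec_le_specNorm M (Vᵀ j)
    _ = k * specNorm M := by simp

lemma abs_trace_gram_sub_trace_gram_le {m n k : ℕ} (A B : Matrix (Fin m) (Fin n) ℝ)
    (V : Matrix (Fin n) (Fin k) ℝ) (hV : Vᵀ * V = 1) :
    |trace (Vᵀ * Aᵀ * A * V) - trace (Vᵀ * Bᵀ * B * V)| ≤ k * specNorm (Aᵀ * A - Bᵀ * B) := by
  have hsub : trace (Vᵀ * (Aᵀ * A - Bᵀ * B) * V) =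
      trace (Vᵀ * Aᵀ * A * V) - trace (Vᵀ * Bᵀ * B * V) := by
    simp only [Matrix.mul_sub, Matrix.sub_mul, trace_sub, Matrix.mul_assoc]
  exact hsub ▸ abs_trace_transpose_mul_mul_le _ V hV

theorem sparse_pca_from_sketch_general {m n k r : ℕ}
    (A At : Matrix (Fin m) (Fin n) ℝ)
    (Sk Stk : Matrix (Fin n) (Fin k) ℝ)
    (hSk : Sk ∈ sparseStiefel n k r) (hStk : Stk ∈ sparseStiefel n k r)
    (hStkMax : ∀ V ∈ sparseStiefel n k r,
      Matrix.trace (Vᵀ * Atᵀ * At * V) ≤ Matrix.trace (Stkᵀ * Atᵀ * At * Stk)) :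
    Matrix.trace (Stkᵀ * Aᵀ * A * Stk) ≥
      Matrix.trace (Skᵀ * Aᵀ * A * Sk) - 2 * (k : ℝ) * specNorm (Aᵀ * A - Atᵀ * At) := by
  have hS := abs_le.mp (abs_trace_gram_sub_trace_gram_le A At Sk hSk.1)
  have hSt := abs_le.mp (abs_trace_gram_sub_trace_gram_le A At Stk hStk.1)
  linarith [hStkMax Sk hSk]

/-- Sparse PCA from a sketch: the optimal sparse components of the sketch `Ã`
capture, with respect to `A`, at least the optimal variance minus
`2k ‖AᵀA - ÃᵀÃ‖₂`. -/
theorem sparse_pca_from_sketch {m n k r : ℕ}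
    (hk : 1 ≤ k) (hkn : k ≤ n) (hr : 1 ≤ r) (hrn : r ≤ n)
    (A At : Matrix (Fin m) (Fin n) ℝ)
    (Sk Stk : Matrix (Fin n) (Fin k) ℝ)
    (hSk : Sk ∈ sparseStiefel n k r) (hStk : Stk ∈ sparseStiefel n k r)
    (hSkMax : ∀ V ∈ sparseStiefel n k r,
      Matrix.trace (Vᵀ * Aᵀ * A * V) ≤ Matrix.trace (Skᵀ * Aᵀ * A * Sk))
    (hStkMax : ∀ V ∈ sparseStiefel n k r,
      Matrix.trace (Vᵀ * Atᵀ * At * V) ≤ Matrix.trace (Stkᵀ * Atᵀ * At * Stk)) :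
    Matrix.trace (Stkᵀ * Aᵀ * A * Stk) ≥
      Matrix.trace (Skᵀ * Aᵀ * A * Sk) - 2 * (k : ℝ) * specNorm (Aᵀ * A - Atᵀ * At) :=
  sparse_pca_from_sketch_general A At Sk Stk hSk hStk hStkMax
end

section
/- (Sparse PCA after greedy thresholding.) Let A ∈ ℝ^{m×n} be nonzero, let δ > 0 and ε > 0, and let Ã ∈ ℝ^{m×n} be defined entrywise by Ã_{ij} = A_{ij} if |A_{ij}| ≥ δ and Ã_{ij} = 0 if |A_{ij}| < δ. Let k̃ = ‖A‖_F² / ‖A‖₂² be the stable rank of A, and suppose ∑_{(i,j): |A_{ij}| < δ} A_{ij}² ≤ ε² · ‖A‖_F² / k̃. Let 1 ≤ k ≤ n and 1 ≤ r ≤ n, and suppose V* ∈ S(n,k,r) satisfies trace(V*ᵀ Aᵀ A V*) ≥ trace(Vᵀ Aᵀ A V) for all V ∈ S(n,k,r), and Ṽ* ∈ S(n,k,r) satisfies trace(Ṽ*ᵀ Ãᵀ Ã Ṽ*) ≥ trace(Vᵀ Ãᵀ Ã V) for all V ∈ S(n,k,r). Then trace(Ṽ*ᵀ Aᵀ A Ṽ*)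 ≥ trace(V*ᵀ Aᵀ A V*) − 2kε · ‖A‖₂² · (2 + ε). -/
open Matrix

/-!
The thresholding error `E = A - Ã` satisfies `‖E‖_F ≤ ε‖A‖₂`. For `V` with orthonormal columns,
`‖AV‖_F ≤ √k‖A‖₂` and `‖EV‖_F ≤ √k‖E‖_F`, hence
`|‖AV‖_F² - ‖ÃV‖_F²| ≤ ‖EV‖_F (2‖AV‖_F + ‖EV‖_F) ≤ kε(2 + ε)‖A‖₂²`. So the two variance
objectives differ by at most `kε(2 + ε)‖A‖₂²` on the whole sparse Stiefel set, and a maximiser of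
the thresholded one loses at most twice that with respect to `A`.
-/

attribute [local instance] Matrix.frobeniusNormedAddCommGroup

lemma abs_norm_sq_sub_norm_sq_le {E : Type*} [SeminormedAddCommGroup E] {x y : E} {s t : ℝ}
    (hx : ‖x‖ ≤ s) (hxy : ‖x - y‖ ≤ t) : |‖x‖ ^ 2 - ‖y‖ ^ 2| ≤ t * (2 * s + t) := by
  have hy : ‖y‖ ≤ ‖x‖ + ‖x - y‖ := norm_le_norm_add_norm_sub x y
  rw [show ‖x‖ ^ 2 - ‖y‖ ^ 2 = (‖x‖ - ‖y‖) * (‖x‖ + ‖y‖) by ring, abs_mul,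
    abs_of_nonneg (by positivity : 0 ≤ ‖x‖ + ‖y‖)]
  exact mul_le_mul ((abs_norm_sub_norm_le x y).trans hxy) (by linarith) (by positivity)
    ((norm_nonneg _).trans hxy)

theorem IsMaxOn.sub_two_mul_le_of_abs_sub_le {α : Type*} {s : Set α} {f g : α → ℝ} {b : α}
    (hb : IsMaxOn g s b) {c : ℝ} (hfg : ∀ x ∈ s, |f x - g x| ≤ c) {a : α} (ha : a ∈ s)
    (hbs : b ∈ s) : f a - 2 * c ≤ f b := by
  have hga : g a ≤ g b := hb ha
  obtain ⟨-, hfa⟩ := abs_le.mp (hfg a ha)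
  obtain ⟨hfb, -⟩ := abs_le.mp (hfg b hbs)
  linarith

namespace Matrix

variable {m n k : Type*} [Fintype m] [Fintype n] [Fintype k]

theorem frobenius_norm_sq_eq_sum_norm_sq_row (M : Matrix m n ℝ) :
    ‖M‖ ^ 2 = ∑ i, ‖WithLp.toLp 2 (M i)‖ ^ 2 :=
  PiLp.norm_sq_eq_of_L2 _ (WithLp.toLp 2 fun i => WithLp.toLp 2 (M i))

theorem frobenius_norm_sq_eq_sum_sq (M : Matrix m n ℝ) : ‖M‖ ^ 2 = ∑ i, ∑ j, M i j ^ 2 := by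
  simp only [frobenius_norm_sq_eq_sum_norm_sq_row, EuclideanSpace.norm_sq_eq, Real.norm_eq_abs, sq_abs]

theorem frobenius_norm_sq_eq_trace (M : Matrix m n ℝ) : ‖M‖ ^ 2 = trace (Mᵀ * M) := by
  rw [frobenius_norm_sq_eq_sum_sq, Finset.sum_comm]
  simp only [trace, diag, mul_apply, transpose_apply, sq]

theorem frobenius_norm_sq_eq_card_of_transpose_mul_self_eq_one [DecidableEq k] {V : Matrix n k ℝ}
    (hV : Vᵀ * V = 1) : ‖V‖ ^ 2 = Fintype.card k := by
  rw [frobenius_norm_sq_eq_trace, hV, trace_one]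

theorem frobenius_norm_mul_sq_eq_trace (B : Matrix m n ℝ) (V : Matrix n k ℝ) :
    ‖B * V‖ ^ 2 = trace (Vᵀ * Bᵀ * B * V) := by
  simp only [frobenius_norm_sq_eq_trace, transpose_mul, Matrix.mul_assoc]

end Matrix

theorem norm_mulVec_le_specNorm {m n : ℕ} (B : Matrix (Fin m) (Fin n) ℝ) (x : Fin n → ℝ) :
    ‖WithLp.toLp 2 (B *ᵥ x)‖ ≤ specNorm B * ‖WithLp.toLp 2 x‖ :=
  (LinearMap.toContinuousLinearMap (toEuclideanLin B)).le_opNorm (WithLp.toLp 2 x)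

theorem frobenius_norm_mul_le_specNorm_mul {m n k : ℕ} (B : Matrix (Fin m) (Fin n) ℝ)
    (V : Matrix (Fin n) (Fin k) ℝ) : ‖B * V‖ ≤ specNorm B * ‖V‖ := by
  have hcol : ∀ j, (B * V)ᵀ j = B *ᵥ Vᵀ j := fun j => by
    ext i; simp only [transpose_apply, mul_apply, mulVec, dotProduct]
  rw [← frobenius_norm_transpose (B * V), ← frobenius_norm_transpose V]
  refine (sq_le_sq₀ (norm_nonneg _) (mul_nonneg (norm_nonneg _) (norm_nonneg _))).mp ?_
  calc ‖(B * V)ᵀ‖ ^ 2 = ∑ j, ‖WithLp.toLp 2 (B *ᵥ Vᵀ j)‖ ^ 2 := by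
        simp only [frobenius_norm_sq_eq_sum_norm_sq_row, hcol]
    _ ≤ ∑ j, (specNorm B * ‖WithLp.toLp 2 (Vᵀ j)‖) ^ 2 := by
        gcongr with j
        exact norm_mulVec_le_specNorm B _
    _ = (specNorm B * ‖Vᵀ‖) ^ 2 := by
        simp only [mul_pow, frobenius_norm_sq_eq_sum_norm_sq_row, Finset.mul_sum]

theorem abs_trace_sub_trace_le {m n k : ℕ} (A B : Matrix (Fin m) (Fin n) ℝ) {ε : ℝ}
    (hAB : ‖A - B‖ ≤ ε * specNorm A) {V : Matrix (Fin n) (Fin k) ℝ} (hV : Vᵀ * V = 1) :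
    |trace (Vᵀ * Aᵀ * A * V) - trace (Vᵀ * Bᵀ * B * V)| ≤ k * ε * specNorm A ^ 2 * (2 + ε) := by
  have hk : ‖V‖ ^ 2 = k := by
    rw [frobenius_norm_sq_eq_card_of_transpose_mul_self_eq_one hV, Fintype.card_fin]
  have hA : ‖A * V‖ ≤ specNorm A * ‖V‖ := frobenius_norm_mul_le_specNorm_mul A V
  have hAB' : ‖A * V - B * V‖ ≤ ε * specNorm A * ‖V‖ := by
    rw [← Matrix.sub_mul]
    exact (frobenius_norm_mul _ _).trans (mul_le_mul_of_nonneg_right hAB (norm_nonneg _))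
  rw [← frobenius_norm_mul_sq_eq_trace, ← frobenius_norm_mul_sq_eq_trace]
  refine (abs_norm_sq_sub_norm_sq_le hA hAB').trans_eq ?_
  linear_combination (ε * specNorm A ^ 2 * (2 + ε)) * hk

theorem frobenius_norm_sq_sub_of_threshold {m n : Type*} [Fintype m] [Fintype n]
    {A At : Matrix m n ℝ} {δ : ℝ} (hAt : ∀ i j, At i j = if δ ≤ |A i j| then A i j else 0) :
    ‖A - At‖ ^ 2 = ∑ i, ∑ j, if |A i j| < δ then A i j ^ 2 else 0 := by
  rw [frobenius_norm_sq_eq_sum_sq]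
  refine Finset.sum_congr rfl fun i _ => Finset.sum_congr rfl fun j _ => ?_
  rw [Matrix.sub_apply, hAt]
  by_cases h : |A i j| < δ
  · rw [if_neg (not_le.mpr h), if_pos h, sub_zero]
  · rw [if_pos (not_lt.mp h), if_neg h, sub_self, zero_pow two_ne_zero]

theorem sparse_pca_after_thresholding_general {m n k r : ℕ}
    (A At : Matrix (Fin m) (Fin n) ℝ)
    (δ ε : ℝ) (hε : 0 < ε)
    (hAt : ∀ i j, At i j = if δ ≤ |A i j| then A i j else 0)
    (htrunc : (∑ i, ∑ j, if |A i j| < δ then (A i j) ^ 2 else 0) ≤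
      ε ^ 2 * frobNorm A ^ 2 / (frobNorm A ^ 2 / specNorm A ^ 2))
    (Vstar Vtstar : Matrix (Fin n) (Fin k) ℝ)
    (hVstar : Vstar ∈ sparseStiefel n k r) (hVtstar : Vtstar ∈ sparseStiefel n k r)
    (hVtstarMax : ∀ V ∈ sparseStiefel n k r,
      Matrix.trace (Vᵀ * Atᵀ * At * V) ≤ Matrix.trace (Vtstarᵀ * Atᵀ * At * Vtstar)) :
    Matrix.trace (Vtstarᵀ * Aᵀ * A * Vtstar) ≥
      Matrix.trace (Vstarᵀ * Aᵀ * A * Vstar) - 2 * (k : ℝ) * ε * specNorm A ^ 2 * (2 + ε) := by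
  have hstable : ε ^ 2 * frobNorm A ^ 2 / (frobNorm A ^ 2 / specNorm A ^ 2) ≤
      (ε * specNorm A) ^ 2 := by
    -- when `‖A‖_F = 0` the right side of `htrunc` is the junk value `0 / 0 = 0`
    rcases eq_or_ne (frobNorm A ^ 2) 0 with h | h
    · rw [h, mul_zero, zero_div]; positivity
    · rw [mul_div_assoc, div_div_cancel₀ h, mul_pow]
  have hE : ‖A - At‖ ≤ ε * specNorm A := by
    refine (sq_le_sq₀ (norm_nonneg _) (mul_nonneg hε.le (norm_nonneg _))).mp ?_
    rw [frobenius_norm_sq_sub_of_threshold hAt]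
    exact htrunc.trans hstable
  have hclose : ∀ V ∈ sparseStiefel n k r,
      |trace (Vᵀ * Aᵀ * A * V) - trace (Vᵀ * Atᵀ * At * V)| ≤ k * ε * specNorm A ^ 2 * (2 + ε) :=
    fun V hV => abs_trace_sub_trace_le A At hE hV.1
  have := IsMaxOn.sub_two_mul_le_of_abs_sub_le (f := fun V => trace (Vᵀ * Aᵀ * A * V))
    hVtstarMax hclose hVstar hVtstar
  linarith

/-- Sparse PCA after greedy thresholding: if zeroing the entries of `A`
smaller than `δ` loses at most an `ε²/k̃` fraction of the squared Frobenius
norm (`k̃ = ‖A‖_F²/‖A‖₂²` the stable rank), then the optimal sparse principal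
components of the thresholded matrix `Ã` lose at most `2kε(2 + ε)‖A‖₂²`
variance with respect to `A`. -/
theorem sparse_pca_after_thresholding {m n k r : ℕ}
    (hk : 1 ≤ k) (hkn : k ≤ n) (hr : 1 ≤ r) (hrn : r ≤ n)
    (A At : Matrix (Fin m) (Fin n) ℝ) (hA : A ≠ 0)
    (δ ε : ℝ) (hδ : 0 < δ) (hε : 0 < ε)
    (hAt : ∀ i j, At i j = if δ ≤ |A i j| then A i j else 0)
    (htrunc : (∑ i, ∑ j, if |A i j| < δ then (A i j) ^ 2 else 0) ≤
      ε ^ 2 * frobNorm A ^ 2 / (frobNorm A ^ 2 / specNorm A ^ 2))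
    (Vstar Vtstar : Matrix (Fin n) (Fin k) ℝ)
    (hVstar : Vstar ∈ sparseStiefel n k r) (hVtstar : Vtstar ∈ sparseStiefel n k r)
    (hVstarMax : ∀ V ∈ sparseStiefel n k r,
      Matrix.trace (Vᵀ * Aᵀ * A * V) ≤ Matrix.trace (Vstarᵀ * Aᵀ * A * Vstar))
    (hVtstarMax : ∀ V ∈ sparseStiefel n k r,
      Matrix.trace (Vᵀ * Atᵀ * At * V) ≤ Matrix.trace (Vtstarᵀ * Atᵀ * At * Vtstar)) :
    Matrix.trace (Vtstarᵀ * Aᵀ * A * Vtstar) ≥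
      Matrix.trace (Vstarᵀ * Aᵀ * A * Vstar) - 2 * (k : ℝ) * ε * specNorm A ^ 2 * (2 + ε) :=
  sparse_pca_after_thresholding_general A At δ ε hε hAt htrunc Vstar Vtstar hVstar hVtstar
    hVtstarMax
end
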